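/- Let X be a directed space and let LX carry the topology O_{⇒L}(LX). Then (LX, O_{⇒L}(LX)) is itself a directed space, i.e., every directed open subset of LX is ⇒_L-open. -/

import Mathlib

variable {X : Type*}

/-- The specialization order: `x ⊑ y` iff `x ∈ closure {y}`. -/
def sle [TopologicalSpace X] (x y : X) : Prop := x ∈ closure {y}

/-- A directed subset with respect to the specialization order. -/
def IsDirSet [TopologicalSpace X] (D : Set X) : Prop :=
  D.Nonempty ∧ ∀ a ∈ D, ∀ b ∈ D, ∃ c ∈ D, sle a c ∧ sle b c

/-- `DConv D x`: the directed set `D`, viewed as a net (indexed by itself with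
the specialization order), converges to `x`. -/
def DConv [TopologicalSpace X] (D : Set X) (x : X) : Prop :=
  IsDirSet D ∧ ∀ U : Set X, IsOpen U → x ∈ U → ∃ d ∈ D, ∀ e ∈ D, sle d e → e ∈ U

/-- Directed open set. -/
def DOpen [TopologicalSpace X] (U : Set X) : Prop :=
  ∀ D : Set X, ∀ x : X, DConv D x → x ∈ U → (D ∩ U).Nonempty

/-- A directed space: every directed open set is open. -/
def IsDirectedSpace (X : Type*) [TopologicalSpace X] : Prop :=
  ∀ U : Set X, DOpen U → IsOpen U

/-- Down-closure with respect to the specialization order. -/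
def dcl [TopologicalSpace X] (F : Set X) : Set X := {x | ∃ a ∈ F, sle x a}

/-- Membership in `LX`: down-closures of nonempty finite sets. -/
def InLX [TopologicalSpace X] (A : Set X) : Prop :=
  ∃ F : Finset X, F.Nonempty ∧ A = dcl (F : Set X)

/-- A directed (under inclusion) family of elements of `LX`. -/
def LDir [TopologicalSpace X] (𝒟 : Set (Set X)) : Prop :=
  (∀ B ∈ 𝒟, InLX B) ∧ 𝒟.Nonempty ∧ ∀ A ∈ 𝒟, ∀ B ∈ 𝒟, ∃ C ∈ 𝒟, A ⊆ C ∧ B ⊆ C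

/-- The convergence `𝒟 ⇒_L ↓F`. -/
def LConv [TopologicalSpace X] (𝒟 : Set (Set X)) (A : Set X) : Prop :=
  LDir 𝒟 ∧ ∃ F : Finset X, F.Nonempty ∧ A = dcl (F : Set X) ∧
    ∀ a ∈ F, ∃ D : Set X, D ⊆ ⋃₀ 𝒟 ∧ DConv D a

/-- `⇒_L`-convergence open subsets of `LX`. -/
def LOpen [TopologicalSpace X] (𝒰 : Set (Set X)) : Prop :=
  (∀ A ∈ 𝒰, InLX A) ∧ ∀ 𝒟 A, LConv 𝒟 A → A ∈ 𝒰 → (𝒟 ∩ 𝒰).Nonempty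

/-- Specialization order of the space `(LX, O_{⇒L}(LX))`. -/
def sleL [TopologicalSpace X] (A B : Set X) : Prop :=
  ∀ 𝒰 : Set (Set X), LOpen 𝒰 → A ∈ 𝒰 → B ∈ 𝒰

/-- A directed subset of the space `LX` (with respect to its specialization order). -/
def LDirSetT [TopologicalSpace X] (𝒟 : Set (Set X)) : Prop :=
  (∀ B ∈ 𝒟, InLX B) ∧ 𝒟.Nonempty ∧
    ∀ A ∈ 𝒟, ∀ B ∈ 𝒟, ∃ C ∈ 𝒟, sleL A C ∧ sleL B C

/-- Topological convergence of a directed net in the space `(LX, O_{⇒L}(LX))`. -/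
def LTopConv [TopologicalSpace X] (𝒟 : Set (Set X)) (A : Set X) : Prop :=
  InLX A ∧ LDirSetT 𝒟 ∧
    ∀ 𝒰 : Set (Set X), LOpen 𝒰 → A ∈ 𝒰 → ∃ B ∈ 𝒟, ∀ C ∈ 𝒟, sleL B C → C ∈ 𝒰

/-!
Inclusion of members of `LX` is below the specialization order of `LX`: if `A ⊆ C` then the
one-member family `{C}` `⇒_L`-converges to `A` (each generator `a` of `A` is the limit of the
constant set `{a} ⊆ C`), so every `⇒_L`-open set containing `A` contains `C`. Consequently a
`⇒_L`-convergent family is directed in `LX` and converges to its limit in the topology of `LX`,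
so a directed open subset of `LX` meets every `⇒_L`-convergent family with limit inside it.
-/

section

variable [TopologicalSpace X]

lemma sle_refl (x : X) : sle x x := subset_closure rfl

lemma dConv_singleton (a : X) : DConv {a} a := by
  refine ⟨⟨Set.singleton_nonempty a, ?_⟩, fun U _ haU => ⟨a, rfl, fun e he _ => he ▸ haU⟩⟩
  rintro _ rfl _ rfl
  exact ⟨_, rfl, sle_refl _, sle_refl _⟩

lemma lConv_singleton_of_subset {A C : Set X} (hA : InLX A) (hC : InLX C) (hAC : A ⊆ C) :
    LConv {C} A := by
  obtain ⟨F, hFne, rfl⟩ := hA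
  refine ⟨⟨by rintro _ rfl; exact hC, ⟨C, rfl⟩, ?_⟩, F, hFne, rfl, fun a ha => ?_⟩
  · rintro _ rfl _ rfl
    exact ⟨_, rfl, le_rfl, le_rfl⟩
  · refine ⟨{a}, ?_, dConv_singleton a⟩
    rintro _ rfl
    exact ⟨C, rfl, hAC ⟨_, ha, sle_refl _⟩⟩

lemma sleL_of_subset {A C : Set X} (hA : InLX A) (hC : InLX C) (hAC : A ⊆ C) : sleL A C := by
  intro 𝒰 h𝒰 hA𝒰
  obtain ⟨_, rfl, hC𝒰⟩ := h𝒰.2 {C} A (lConv_singleton_of_subset hA hC hAC) hA𝒰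
  exact hC𝒰

lemma LDir.lDirSetT {𝒟 : Set (Set X)} (h𝒟 : LDir 𝒟) : LDirSetT 𝒟 := by
  obtain ⟨hLX, hne, hdir⟩ := h𝒟
  refine ⟨hLX, hne, fun B hB B' hB' => ?_⟩
  obtain ⟨C, hC, hBC, hB'C⟩ := hdir B hB B' hB'
  exact ⟨C, hC, sleL_of_subset (hLX B hB) (hLX C hC) hBC,
    sleL_of_subset (hLX B' hB') (hLX C hC) hB'C⟩

lemma LConv.lTopConv {𝒟 : Set (Set X)} {A : Set X} (h : LConv 𝒟 A) : LTopConv 𝒟 A := by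
  obtain ⟨F, hFne, hFeq, -⟩ := h.2
  refine ⟨⟨F, hFne, hFeq⟩, h.1.lDirSetT, fun 𝒱 h𝒱 hA𝒱 => ?_⟩
  obtain ⟨B, hB𝒟, hB𝒱⟩ := h𝒱.2 𝒟 A h hA𝒱
  exact ⟨B, hB𝒟, fun C _ hBC => hBC 𝒱 h𝒱 hB𝒱⟩

end

theorem stmt_10_general [TopologicalSpace X] :
    ∀ 𝒰 : Set (Set X), (∀ A ∈ 𝒰, InLX A) →
      (∀ 𝒟 A, LTopConv 𝒟 A → A ∈ 𝒰 → (𝒟 ∩ 𝒰).Nonempty) →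
      LOpen 𝒰 :=
  fun _ hmem hdOpen => ⟨hmem, fun 𝒟 A hconv hA => hdOpen 𝒟 A hconv.lTopConv hA⟩

/-- `(LX, O_{⇒L}(LX))` is a directed space: every directed open
subset of `LX` is `⇒_L`-open. -/
theorem stmt_10 [TopologicalSpace X] [T0Space X] (hX : IsDirectedSpace X) :
    ∀ 𝒰 : Set (Set X), (∀ A ∈ 𝒰, InLX A) →
      (∀ 𝒟 A, LTopConv 𝒟 A → A ∈ 𝒰 → (𝒟 ∩ 𝒰).Nonempty) →
      LOpen 𝒰 :=
  stmt_10_general
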